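/- arXiv:2605.27688 — 3 statements merged into one kernel-verified Lean document; each statement's English description precedes it below -/
import Mathlib

section
/- Let p ≥ 2. In the positive braid word w = (σ_1 σ_2 ⋯ σ_{p-1})^p (the full twist Δ_p² on p strands), any two distinct strands cross exactly twice. Formally: with the position-tracking model below, for all strands s ≠ s' in Fin p, the number of indices t (1 ≤ t ≤ p(p−1)) at which strands s and s' cross equals 2. -/
open scoped Classical

/-- The orbit of `x` under a permutation `π`: `{π^n x : n ∈ ℤ}`. -/
def permOrbit {α : Type*} (π : Equiv.Perm α) (x : α) : Set α := {y | π.SameCycle x y}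

/-- The number of orbits of a permutation. -/
noncomputable def orbitCount {α : Type*} (π : Equiv.Perm α) : ℕ :=
  (Set.range (permOrbit π)).ncard

/-- The transposition of adjacent positions `i`, `i+1` (0-indexed) on `Fin p`,
corresponding to the braid letter `σ_{i+1}`; identity if out of range. -/
def stepPerm (p i : ℕ) : Equiv.Perm (Fin p) :=
  if h : i + 1 < p then Equiv.swap ⟨i, Nat.lt_of_succ_lt h⟩ ⟨i + 1, h⟩ else 1

/-- Position-tracking: `posAfter p w t` is the position function after the first
`t` letters of the positive braid word `w` (letter `i` denotes `σ_{i+1}`). -/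
def posAfter (p : ℕ) (w : List ℕ) (t : ℕ) : Equiv.Perm (Fin p) :=
  ((w.take t).map (stepPerm p)).foldl (fun a g => g * a) 1

/-- The underlying permutation of a positive braid word. -/
def permOf (p : ℕ) (w : List ℕ) : Equiv.Perm (Fin p) := posAfter p w w.length

/-- The number of letters of `w` at which strands `s` and `s'` cross. -/
def crossCount (p : ℕ) (w : List ℕ) (s s' : Fin p) : ℕ :=
  ((Finset.range w.length).filter fun t =>
    ({(posAfter p w t s).val, (posAfter p w t s').val} : Finset ℕ)
      = {w.getD t 0, w.getD t 0 + 1}).card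

/-- Concatenation of `q` copies of the word `u`. -/
def wordPow (u : List ℕ) (q : ℕ) : List ℕ := (List.replicate q u).flatten

/-- The word `σ_1 σ_2 ⋯ σ_{m-1}` (0-indexed letters `0,…,m-2`). -/
def ascBlock (m : ℕ) : List ℕ := List.range (m - 1)

/-- The full twist word `(σ_1 ⋯ σ_{p-1})^p` on `p` strands. -/
def fullTwistWord (p : ℕ) : List ℕ := wordPow (ascBlock p) p

/-- The orbit of `x` under `π`, as a finset. -/
noncomputable def orbitFinset (p : ℕ) (π : Equiv.Perm (Fin p)) (x : Fin p) : Finset (Fin p) :=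
  Finset.univ.filter fun y => π.SameCycle x y

/-- Total number of crossings in `w` between the strands of the component of `s`
and the strands of the component of `s'` (components w.r.t. `π`). -/
noncomputable def crossBetween (p : ℕ) (w : List ℕ) (π : Equiv.Perm (Fin p))
    (s s' : Fin p) : ℕ :=
  ∑ x ∈ orbitFinset p π s, ∑ y ∈ orbitFinset p π s', crossCount p w x y

/-- Linking number of the components of `s` and `s'` in the closure of the positive
braid word `w`: half the number of crossings between them. -/
noncomputable def linking (p : ℕ) (w : List ℕ) (π : Equiv.Perm (Fin p))
    (s s' : Fin p) : ℕ :=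
  crossBetween p w π s s' / 2

/-- The 3-cycle `(0 1 2)` on `Fin N`, fixing all other points. -/
def tau3 (N : ℕ) (h : 3 ≤ N) : Equiv.Perm (Fin N) :=
  Equiv.swap ⟨0, by omega⟩ ⟨2, by omega⟩ * Equiv.swap ⟨0, by omega⟩ ⟨1, by omega⟩

/-- `Fin s` is equivalent to the points of `Fin N` with value `< s`. -/
def subEquiv (s N : ℕ) (h : s ≤ N) : Fin s ≃ {x : Fin N // (x : ℕ) < s} where
  toFun x := ⟨⟨x, lt_of_lt_of_le x.2 h⟩, x.2⟩
  invFun y := ⟨(y.1 : ℕ), y.2⟩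
  left_inv x := rfl
  right_inv y := rfl

/-- The permutation of `Fin N` acting as `x ↦ x + c (mod s)` on `{0,…,s-1}` and
fixing all points `≥ s`. -/
def tauShift (s c N : ℕ) (h : s ≤ N) : Equiv.Perm (Fin N) :=
  (finRotate s ^ c).extendDomain (subEquiv s N h)

lemma posAfter_zero (p w) : posAfter p w 0 = 1 := rfl

lemma posAfter_succ (p : ℕ) (w : List ℕ) (t : ℕ) (ht : t < w.length) :
    posAfter p w (t+1) = stepPerm p (w.getD t 0) * posAfter p w t := by
  unfold posAfter
  have h2 : t < (w.map (stepPerm p)).length := by simpa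
  rw [List.getD_eq_getElem?_getD, List.getElem?_eq_getElem ht]
  simp only [List.map_take]
  rw [List.take_succ, List.getElem?_eq_getElem h2]
  simp [List.foldl_append, List.getElem_map]

def braidA (p j : ℕ) : Equiv.Perm (Fin p) := posAfter p (ascBlock p) j

lemma ascBlock_length (p : ℕ) : (ascBlock p).length = p - 1 := by simp [ascBlock]

lemma ascBlock_getD (p j : ℕ) (hj : j < p - 1) : (ascBlock p).getD j 0 = j := by
  rw [List.getD_eq_getElem?_getD, List.getElem?_eq_getElem (by simpa [ascBlock] using hj)]
  simp [ascBlock]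

lemma braidA_succ (p j : ℕ) (hj : j < p - 1) :
    braidA p (j+1) = stepPerm p j * braidA p j := by
  have := posAfter_succ p (ascBlock p) j (by rw [ascBlock_length]; omega)
  rwa [ascBlock_getD p j hj] at this

lemma stepPerm_val (p j : ℕ) (hj : j + 1 < p) (y : Fin p) :
    ((stepPerm p j) y).val = if (y:ℕ) = j then j+1 else if (y:ℕ) = j+1 then j else y := by
  rw [stepPerm, dif_pos hj, Equiv.swap_apply_def]
  split_ifs <;> simp_all [Fin.ext_iff]

lemma braidA_val (p : ℕ) (x : Fin p) : ∀ j, j ≤ p - 1 →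
    ((braidA p j) x).val = if (x:ℕ) = 0 then j else if (x:ℕ) ≤ j then (x:ℕ) - 1 else (x:ℕ) := by
  intro j
  induction j with
  | zero =>
      intro _
      have : braidA p 0 = 1 := rfl
      rw [this]
      simp only [Equiv.Perm.one_apply]
      split_ifs <;> omega
  | succ j ih =>
      intro hj
      have hx := x.2
      rw [braidA_succ p j (by omega), Equiv.Perm.mul_apply,
        stepPerm_val p j (by omega), ih (by omega)]
      split_ifs <;> omega

lemma braidApow_val (p : ℕ) (hp : 2 ≤ p) (x : Fin p) : ∀ q,
    (((braidA p (p-1))^q) x).val = ((x:ℕ) + q*(p-1)) % p := by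
  intro q
  induction q with
  | zero => simp [Nat.mod_eq_of_lt x.2]
  | succ q ih =>
      rw [pow_succ', Equiv.Perm.mul_apply, braidA_val p _ (p-1) le_rfl]
      set u := ((braidA p (p-1))^q) x with hu
      have hup : (u:ℕ) < p := u.2
      have key : ((x:ℕ) + (q+1)*(p-1)) % p = ((u:ℕ) + (p-1)) % p := by
        have h1 : (x:ℕ) + (q+1)*(p-1) = ((x:ℕ) + q*(p-1)) + (p-1) := by ring
        rw [h1, ← Nat.mod_add_mod, ih]
      rw [key]
      by_cases h0 : (u:ℕ) = 0
      · simp [h0, Nat.mod_eq_of_lt (show p-1 < p by omega)]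
      · have h1 : (u:ℕ) ≤ p-1 := by omega
        rw [if_neg h0, if_pos h1]
        have h2 : (u:ℕ) + (p-1) = ((u:ℕ)-1) + p := by omega
        rw [h2, Nat.add_mod_right, Nat.mod_eq_of_lt (by omega)]

lemma fullTwistWord_length (p : ℕ) : (fullTwistWord p).length = p * (p-1) := by
  simp [fullTwistWord, wordPow, ascBlock]

lemma wordPow_getD (u : List ℕ) : ∀ q t, t < q * u.length →
    (wordPow u q).getD t 0 = u.getD (t % u.length) 0 := by
  intro q
  induction q with
  | zero => intro t ht; simp at ht
  | succ q ih =>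
      intro t ht
      have hexp : (q+1) * u.length = q * u.length + u.length := by ring
      rw [show wordPow u (q+1) = u ++ wordPow u q by
        simp [wordPow, List.replicate_succ]]
      by_cases h : t < u.length
      · rw [List.getD_append _ _ _ _ h, Nat.mod_eq_of_lt h]
      · have hle : u.length ≤ t := by omega
        rw [List.getD_append_right _ _ _ _ hle, ih (t - u.length) (by omega),
          Nat.mod_eq_sub_mod hle]

lemma posAfter_formula (p : ℕ) (hp : 2 ≤ p) : ∀ t, t ≤ p*(p-1) →
    posAfter p (fullTwistWord p) t
      = braidA p (t % (p-1)) * (braidA p (p-1))^(t/(p-1)) := by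
  intro t
  induction t with
  | zero =>
      intro _
      have h0 : braidA p 0 = 1 := rfl
      simp [posAfter_zero, h0]
  | succ t ih =>
      intro ht
      have hlt : t < p*(p-1) := by omega
      rw [posAfter_succ p _ t (by rw [fullTwistWord_length]; omega)]
      have hw : (fullTwistWord p).getD t 0 = t % (p-1) := by
        have h1 := wordPow_getD (ascBlock p) p t (by rw [ascBlock_length]; exact hlt)
        rw [fullTwistWord, h1, ascBlock_length,
          ascBlock_getD p _ (Nat.mod_lt _ (by omega))]
      rw [hw, ih (by omega)]
      set r := t % (p-1) with hrdef
      set q := t / (p-1) with hqdef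
      have hr : r < p-1 := Nat.mod_lt _ (by omega)
      have hdm : (p-1) * q + r = t := Nat.div_add_mod t (p-1)
      rw [← mul_assoc, ← braidA_succ p r hr]
      by_cases hcase : r + 1 < p - 1
      · have he : t+1 = (r+1) + (p-1)*q := by omega
        have hmod : (t+1) % (p-1) = r+1 := by
          rw [he, Nat.add_mul_mod_self_left, Nat.mod_eq_of_lt hcase]
        have hdiv : (t+1) / (p-1) = q := by
          rw [he, Nat.add_mul_div_left _ _ (show 0 < p-1 by omega),
            Nat.div_eq_of_lt hcase, Nat.zero_add]
        rw [hmod, hdiv]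
      · have hr1 : r + 1 = p - 1 := by omega
        have hexp : (p-1)*(q+1) = (p-1)*q + (p-1) := by ring
        have ht1 : t+1 = (p-1)*(q+1) := by omega
        have hmod : (t+1) % (p-1) = 0 := by rw [ht1]; exact Nat.mul_mod_right _ _
        have hdiv : (t+1) / (p-1) = q + 1 := by
          rw [ht1]; exact Nat.mul_div_cancel_left _ (show 0 < p-1 by omega)
        rw [hmod, hdiv, hr1]
        have hA0 : braidA p 0 = 1 := rfl
        rw [hA0, one_mul, pow_succ']

lemma fullTwistWord_getD (p t : ℕ) (hp : 2 ≤ p) (ht : t < p*(p-1)) :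
    (fullTwistWord p).getD t 0 = t % (p-1) := by
  have h1 := wordPow_getD (ascBlock p) p t (by rw [ascBlock_length]; exact ht)
  rw [fullTwistWord, h1, ascBlock_length, ascBlock_getD p _ (Nat.mod_lt _ (by omega))]

lemma pair_eq (a b c d : ℕ) (hcd : c ≠ d) :
    ({a, b} : Finset ℕ) = {c, d} ↔ (a = c ∧ b = d) ∨ (a = d ∧ b = c) := by
  constructor
  · intro hEq
    have ha := Finset.ext_iff.mp hEq a
    have hb := Finset.ext_iff.mp hEq b
    have hc := Finset.ext_iff.mp hEq c
    have hd := Finset.ext_iff.mp hEq d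
    simp at ha hb hc hd
    omega
  · rintro (⟨rfl, rfl⟩ | ⟨rfl, rfl⟩)
    · rfl
    · exact Finset.pair_comm a b

lemma mod_small (a p : ℕ) (hp : 0 < p) (h : a < 2*p) :
    a % p = if a < p then a else a - p := by
  split_ifs with h'
  · exact Nat.mod_eq_of_lt h'
  · rw [Nat.mod_eq_sub_mod (by omega), Nat.mod_eq_of_lt (by omega)]

lemma u_shift (p x q : ℕ) (hq : q < p) : (x + q*(p-1)) % p = (x + p - q) % p := by
  have hqp : q * p = q * (p-1) + q := by
    conv_lhs => rw [show p = (p-1)+1 by omega]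
    rw [Nat.mul_succ]
  have h1 : (x + p - q) + q*p = (x + q*(p-1)) + p := by omega
  have h2 := Nat.add_mul_mod_self_right (x + p - q) q p
  rw [mul_comm q p, mul_comm p q] at h2
  rw [← h2, h1, Nat.add_mod_right]

lemma pos_val (p : ℕ) (hp : 2 ≤ p) (t : ℕ) (ht : t ≤ p*(p-1)) (x : Fin p) :
    (posAfter p (fullTwistWord p) t x).val =
      if ((x:ℕ) + (t/(p-1))*(p-1)) % p = 0 then t % (p-1)
      else if ((x:ℕ) + (t/(p-1))*(p-1)) % p ≤ t % (p-1)
        then ((x:ℕ) + (t/(p-1))*(p-1)) % p - 1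
        else ((x:ℕ) + (t/(p-1))*(p-1)) % p := by
  rw [posAfter_formula p hp t ht, Equiv.Perm.mul_apply,
    braidA_val p _ (t % (p-1)) (le_of_lt (Nat.mod_lt _ (by omega))),
    braidApow_val p hp x (t/(p-1))]

lemma f_eq_iff (p j u : ℕ) (hp : 2 ≤ p) (hj : j < p-1) (hu : u < p) :
    ((if u = 0 then j else if u ≤ j then u - 1 else u) = j ↔ u = 0)
    ∧ ((if u = 0 then j else if u ≤ j then u - 1 else u) = j + 1 ↔ u = j + 1) := by
  split_ifs <;> omega

lemma zero_iff (p x q : ℕ) (hp : 2 ≤ p) (hx : x < p) (hq : q < p) :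
    (x + p - q) % p = 0 ↔ q = x := by
  rw [mod_small _ p (by omega) (by omega)]
  split_ifs <;> omega

lemma cross_iff (p : ℕ) (hp : 2 ≤ p) (s s' : Fin p) (hss : s ≠ s') (t : ℕ) (ht : t < p*(p-1)) :
    (({(posAfter p (fullTwistWord p) t s).val, (posAfter p (fullTwistWord p) t s').val} : Finset ℕ)
      = {(fullTwistWord p).getD t 0, (fullTwistWord p).getD t 0 + 1})
    ↔ ((t/(p-1) = (s:ℕ) ∧ ((s':ℕ) + p - (s:ℕ)) % p = t % (p-1) + 1)
      ∨ (t/(p-1) = (s':ℕ) ∧ ((s:ℕ) + p - (s':ℕ)) % p = t % (p-1) + 1)) := by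
  have hjlt : t % (p-1) < p - 1 := Nat.mod_lt _ (by omega)
  have hqlt : t / (p-1) < p := (Nat.div_lt_iff_lt_mul (by omega)).mpr ht
  rw [pos_val p hp t (by omega) s, pos_val p hp t (by omega) s',
    fullTwistWord_getD p t hp ht, u_shift p (s:ℕ) (t/(p-1)) hqlt,
    u_shift p (s':ℕ) (t/(p-1)) hqlt, pair_eq _ _ _ _ (by omega)]
  have hs := s.2
  have hs' := s'.2
  have hne : (s:ℕ) ≠ (s':ℕ) := fun hh => hss (Fin.ext hh)
  generalize hq : t / (p-1) = q at hqlt ⊢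
  generalize hj : t % (p-1) = j at hjlt ⊢
  rw [(f_eq_iff p j (((s:ℕ) + p - q) % p) hp hjlt (Nat.mod_lt _ (by omega))).1,
    (f_eq_iff p j (((s:ℕ) + p - q) % p) hp hjlt (Nat.mod_lt _ (by omega))).2,
    (f_eq_iff p j (((s':ℕ) + p - q) % p) hp hjlt (Nat.mod_lt _ (by omega))).1,
    (f_eq_iff p j (((s':ℕ) + p - q) % p) hp hjlt (Nat.mod_lt _ (by omega))).2,
    zero_iff p (s:ℕ) q hp hs hqlt, zero_iff p (s':ℕ) q hp hs' hqlt]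
  constructor
  · rintro (⟨h1, h2⟩ | ⟨h1, h2⟩)
    · exact Or.inl ⟨h1, by rw [← h1]; exact h2⟩
    · exact Or.inr ⟨h2, by rw [← h2]; exact h1⟩
  · rintro (⟨h1, h2⟩ | ⟨h1, h2⟩)
    · exact Or.inl ⟨h1, by rw [h1]; exact h2⟩
    · exact Or.inr ⟨by rw [h1]; exact h2, h1⟩


/-- In the full twist `Δ_p² = (σ_1⋯σ_{p-1})^p` on `p ≥ 2` strands, any two distinct
strands cross exactly twice. -/
theorem stmt4 (p : ℕ) (hp : 2 ≤ p) (s s' : Fin p) (h : s ≠ s') :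
    crossCount p (fullTwistWord p) s s' = 2 := by
  have hs := s.2
  have hs' := s'.2
  have hne : (s:ℕ) ≠ (s':ℕ) := fun hh => h (Fin.ext hh)
  have hc := mod_small ((s':ℕ) + p - (s:ℕ)) p (by omega) (by omega)
  have hd := mod_small ((s:ℕ) + p - (s':ℕ)) p (by omega) (by omega)
  set m1 := ((s':ℕ) + p - (s:ℕ)) % p with hm1
  set m2 := ((s:ℕ) + p - (s':ℕ)) % p with hm2
  have hm1b : 1 ≤ m1 ∧ m1 ≤ p - 1 := by split_ifs at hc <;> omega
  have hm2b : 1 ≤ m2 ∧ m2 ≤ p - 1 := by split_ifs at hd <;> omega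
  set t1 := (s:ℕ)*(p-1) + (m1 - 1) with ht1
  set t2 := (s':ℕ)*(p-1) + (m2 - 1) with ht2
  have hsq : (s:ℕ)*(p-1) ≤ (p-1)*(p-1) := Nat.mul_le_mul_right _ (by omega)
  have hsq' : (s':ℕ)*(p-1) ≤ (p-1)*(p-1) := Nat.mul_le_mul_right _ (by omega)
  have hpp : p*(p-1) = (p-1)*(p-1) + (p-1) := by
    have h1 : p = (p-1)+1 := by omega
    calc p*(p-1) = ((p-1)+1)*(p-1) := by rw [← h1]
    _ = (p-1)*(p-1) + (p-1) := by ring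
  have ht1lt : t1 < p*(p-1) := by omega
  have ht2lt : t2 < p*(p-1) := by omega
  have e1 : t1 = (m1-1) + (p-1)*(s:ℕ) := by rw [ht1]; ring
  have e2 : t2 = (m2-1) + (p-1)*(s':ℕ) := by rw [ht2]; ring
  have hq1 : t1 / (p-1) = (s:ℕ) := by
    rw [e1, Nat.add_mul_div_left _ _ (show 0 < p-1 by omega),
      Nat.div_eq_of_lt (by omega), Nat.zero_add]
  have hq2 : t2 / (p-1) = (s':ℕ) := by
    rw [e2, Nat.add_mul_div_left _ _ (show 0 < p-1 by omega),
      Nat.div_eq_of_lt (by omega), Nat.zero_add]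
  have hr1 : t1 % (p-1) = m1 - 1 := by
    rw [e1, Nat.add_mul_mod_self_left, Nat.mod_eq_of_lt (by omega)]
  have hr2 : t2 % (p-1) = m2 - 1 := by
    rw [e2, Nat.add_mul_mod_self_left, Nat.mod_eq_of_lt (by omega)]
  have ht12 : t1 ≠ t2 := fun hEq => hne (by rw [← hq1, hEq, hq2])
  have hcard : ((Finset.range ((fullTwistWord p).length)).filter fun t =>
      ({(posAfter p (fullTwistWord p) t s).val, (posAfter p (fullTwistWord p) t s').val} : Finset ℕ)
        = {(fullTwistWord p).getD t 0, (fullTwistWord p).getD t 0 + 1}) = {t1, t2} := by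
    ext t
    simp only [Finset.mem_filter, Finset.mem_range, Finset.mem_insert,
      Finset.mem_singleton, fullTwistWord_length]
    constructor
    · rintro ⟨htlt, hP⟩
      rw [cross_iff p hp s s' h t htlt] at hP
      have hdm := Nat.div_add_mod t (p-1)
      rcases hP with ⟨hqe, hme⟩ | ⟨hqe, hme⟩
      · left
        rw [e1, ← hqe]
        omega
      · right
        rw [e2, ← hqe]
        omega
    · rintro (rfl | rfl)
      · refine ⟨ht1lt, ?_⟩
        rw [cross_iff p hp s s' h t1 ht1lt]
        left
        exact ⟨hq1, by rw [hr1]; omega⟩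
      · refine ⟨ht2lt, ?_⟩
        rw [cross_iff p hp s s' h t2 ht2lt]
        right
        exact ⟨hq2, by rw [hr2]; omega⟩
  unfold crossCount
  rw [hcard, Finset.card_insert_of_notMem (by simpa using ht12), Finset.card_singleton]
end

section
/- Let a, b, c, k be positive integers, set s = a + b + c and N = (k+1)s + c. Define permutations of Fin N (0-indexed): ρ(x) = x + s (mod N), and τ acting on {0, …, s−1} by τ(x) = x + c (mod s) and fixing all points ≥ s. Let π = τ ∘ ρ. Then for any two distinct points i ≠ j with 0 ≤ i, j < a + b, the points i and j lie in distinct orbits of π. Equivalently, each orbit of π meets the set {0, …, a+b−1} in at most one point. (This is the permutation-level statement that the first a+b strands of the braid (σ_1⋯σ_{N-1})^{s}(σ_1⋯σ_{s-1})^{c} lie on pairwise distinct, parallel components of the T-link T((s,c),(N,s)).) -/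
open scoped Classical

lemma rotPow_val : ∀ (M : ℕ) (m : ℕ) (x : Fin M), ((finRotate M ^ m) x : ℕ) = ((x : ℕ) + m) % M
  | 0, _, x => x.elim0
  | (n+1), m, x => by
    induction m generalizing x with
    | zero => simp [Nat.mod_eq_of_lt x.2]
    | succ m ih =>
      rw [pow_succ, Equiv.Perm.mul_apply, finRotate_succ_apply, ih, Fin.val_add, Fin.val_one']
      conv_rhs => rw [show (x : ℕ) + (m + 1) = (x : ℕ) + 1 + m by omega,
        Nat.add_mod ((x:ℕ)+1) m, Nat.add_mod (x:ℕ) 1]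
      simp [Nat.mod_add_mod, Nat.add_mod_mod, Nat.mod_eq_of_lt x.2]

lemma key_inv (s c N q : ℕ) (hsN : s ≤ N) (hq : N = q * s + s + c)
    (x : Fin N) :
    (((tauShift s c N hsN * (finRotate N) ^ s) x : Fin N) : ℕ) % s = (x : ℕ) % s := by
  rw [Equiv.Perm.mul_apply]
  set y : Fin N := (finRotate N ^ s) x with hy
  have hyval : (y : ℕ) = ((x : ℕ) + s) % N := rotPow_val N s x
  by_cases hw : (x : ℕ) + s < N
  · have hyv : (y : ℕ) = (x : ℕ) + s := by rw [hyval, Nat.mod_eq_of_lt hw]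
    have hns : ¬ ((y : ℕ) < s) := by omega
    rw [tauShift, Equiv.Perm.extendDomain_apply_not_subtype (p := fun z : Fin N => (z:ℕ) < s) _ _ (b := y) hns, hyv, Nat.add_mod_right]
  · have hx2 : (x : ℕ) < N := x.2
    have hyv : (y : ℕ) = (x : ℕ) + s - N := by
      rw [hyval, Nat.mod_eq_sub_mod (by omega), Nat.mod_eq_of_lt (by omega)]
    have hlt : (y : ℕ) < s := by omega
    rw [tauShift, Equiv.Perm.extendDomain_apply_subtype (p := fun z : Fin N => (z:ℕ) < s) _ _ (b := y) hlt]
    have : (((subEquiv s N hsN) ((finRotate s ^ c) ((subEquiv s N hsN).symm ⟨y, hlt⟩)) : Fin N) : ℕ)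
        = (((finRotate s ^ c) (⟨(y : ℕ), hlt⟩ : Fin s)) : ℕ) := rfl
    rw [this, rotPow_val]
    have h1 : (y : ℕ) + c = (x : ℕ) - q * s := by omega
    have h2 : q * s ≤ (x : ℕ) := by omega
    have h2' : s * q ≤ (x : ℕ) := Nat.mul_comm q s ▸ h2
    rw [h1]
    calc ((x : ℕ) - q * s) % s % s = ((x : ℕ) - s * q) % s % s := by rw [Nat.mul_comm]
      _ = (x : ℕ) % s % s := by rw [Nat.sub_mul_mod h2']
      _ = (x : ℕ) % s := Nat.mod_mod_of_dvd _ (dvd_refl s)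

/-- For `s = a+b+c`, `N = (k+1)s + c`, and `π = τ ∘ ρ` (where `ρ(x) = x + s mod N`
and `τ` adds `c mod s` on `{0,…,s-1}`, fixing points `≥ s`), any two distinct points
`i ≠ j` in `{0,…,a+b-1}` lie in distinct orbits of `π`: the first `a+b` strands of
the braid of `T((s,c),(N,s))` lie on pairwise distinct parallel components. -/
theorem stmt9 (a b c k : ℕ) (ha : 0 < a) (hb : 0 < b) (hc : 0 < c) (hk : 0 < k) :
    ∀ i j : Fin ((k + 1) * (a + b + c) + c),
      (i : ℕ) < a + b → (j : ℕ) < a + b → i ≠ j →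
      ¬ ((tauShift (a + b + c) c ((k + 1) * (a + b + c) + c)
            (le_trans (Nat.le_mul_of_pos_left _ (Nat.succ_pos k)) (Nat.le_add_right _ _)) *
          (finRotate ((k + 1) * (a + b + c) + c)) ^ (a + b + c)).SameCycle i j) := by
  set s := a + b + c with hs
  set N := (k + 1) * (a + b + c) + c with hN
  set π : Equiv.Perm (Fin N) :=
    tauShift (a + b + c) c ((k + 1) * (a + b + c) + c)
        (le_trans (Nat.le_mul_of_pos_left _ (Nat.succ_pos k)) (Nat.le_add_right _ _)) *
      (finRotate ((k + 1) * (a + b + c) + c)) ^ (a + b + c) with hπ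
  intro i j hi hj hij hsc
  have hq : N = k * s + s + c := by rw [hN, hs]; ring
  have key : ∀ x : Fin N, ((π x : Fin N) : ℕ) % s = (x : ℕ) % s := fun x =>
    key_inv s c N k _ hq x
  have inv : ∀ m : ℕ, (((π ^ m) i : Fin N) : ℕ) % s = (i : ℕ) % s := by
    intro m
    induction m with
    | zero => simp
    | succ m ih => rw [pow_succ', Equiv.Perm.mul_apply, key, ih]
  obtain ⟨n, -, hn⟩ := hsc.exists_pow_eq'
  have hji : (j : ℕ) % s = (i : ℕ) % s := by rw [← hn]; exact inv n
  rw [Nat.mod_eq_of_lt (by omega), Nat.mod_eq_of_lt (by omega)] at hji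
  exact hij (Fin.ext hji.symm)
end

section
/- Let a, b, c, k be positive integers, set s = a + b + c and N = (k+1)s + c, and let π = τ ∘ ρ be the permutation of Fin N with ρ(x) = x + s (mod N) and τ(x) = x + c (mod s) on {0,…,s−1}, fixing points ≥ s. Then for 0 ≤ i < c, the orbit of i under π has exactly k + 2 elements, while for c ≤ i < a + b, the orbit of i under π has exactly k + 1 elements. Moreover, in either case the orbit of i meets {0,…,a+b−1} exactly in {i}. -/
open scoped Classical

lemma finRotate_val (N : ℕ) (y : Fin N) : (finRotate N y).val = (y.val + 1) % N := by
  cases N with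
  | zero => exact y.elim0
  | succ n =>
    rw [finRotate_succ_apply]
    simp [Fin.add_def, Fin.val_one', Nat.add_mod_mod]

lemma finRotate_pow_val (N m : ℕ) (x : Fin N) :
    (((finRotate N) ^ m) x).val = (x.val + m) % N := by
  induction m with
  | zero => simpa using (Nat.mod_eq_of_lt x.2).symm
  | succ m ih =>
    rw [pow_succ', Equiv.Perm.mul_apply, finRotate_val, ih, Nat.mod_add_mod, Nat.add_assoc]

lemma tauShift_val_lt {s c N : ℕ} (h : s ≤ N) (x : Fin N) (hx : x.val < s) :
    ((tauShift s c N h) x).val = (x.val + c) % s := by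
  rw [tauShift, Equiv.Perm.extendDomain_apply_subtype (finRotate s ^ c) (subEquiv s N h) hx]
  show (((finRotate s ^ c) ((subEquiv s N h).symm ⟨x, hx⟩))).val = _
  rw [finRotate_pow_val]
  rfl

lemma tauShift_apply_ge {s c N : ℕ} (h : s ≤ N) (x : Fin N) (hx : ¬ x.val < s) :
    (tauShift s c N h) x = x :=
  Equiv.Perm.extendDomain_apply_not_subtype _ _ hx

lemma orbit_eq_image {α : Type*} [Finite α] [DecidableEq α] (π : Equiv.Perm α) (x : α) (p : ℕ) (hp : 0 < p)
    (hfix : (π ^ p) x = x) :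
    permOrbit π x = ↑((Finset.range p).image fun m => (π ^ m) x) := by
  have hmul : ∀ q r : ℕ, (π ^ (p * q + r)) x = (π ^ r) x := by
    intro q r
    induction q with
    | zero => simp
    | succ q ih =>
      have h1 : p * (q + 1) + r = (p * q + r) + p := by ring
      rw [h1, pow_add, Equiv.Perm.mul_apply, hfix, ih]
  ext y
  simp only [permOrbit, Set.mem_setOf_eq, Finset.coe_image, Set.mem_image, Finset.mem_coe,
    Finset.mem_range]
  constructor
  · intro h
    obtain ⟨m, -, rfl⟩ := h.exists_pow_eq'
    refine ⟨m % p, Nat.mod_lt _ hp, ?_⟩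
    rw [← hmul (m / p) (m % p), Nat.div_add_mod]
  · rintro ⟨m, -, rfl⟩
    exact ⟨(m : ℤ), by rw [zpow_natCast]⟩

/-- For `s = a+b+c`, `N = (k+1)s + c` and `π = τ ∘ ρ` as in the T-link
`T((s,c),(N,s))`: for `0 ≤ i < c` the orbit of `i` under `π` has exactly `k+2`
elements, for `c ≤ i < a+b` it has exactly `k+1` elements, and in either case the
orbit meets `{0,…,a+b-1}` exactly in `{i}`. -/
theorem stmt10 (a b c k : ℕ) (ha : 0 < a) (hb : 0 < b) (hc : 0 < c) (hk : 0 < k) :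
    let π : Equiv.Perm (Fin ((k + 1) * (a + b + c) + c)) :=
      tauShift (a + b + c) c ((k + 1) * (a + b + c) + c)
          (le_trans (Nat.le_mul_of_pos_left _ (Nat.succ_pos k)) (Nat.le_add_right _ _)) *
        (finRotate ((k + 1) * (a + b + c) + c)) ^ (a + b + c)
    ∀ i : Fin ((k + 1) * (a + b + c) + c), (i : ℕ) < a + b →
      ((i : ℕ) < c → (permOrbit π i).ncard = k + 2) ∧
      (c ≤ (i : ℕ) → (permOrbit π i).ncard = k + 1) ∧
      permOrbit π i ∩ {x : Fin ((k + 1) * (a + b + c) + c) | (x : ℕ) < a + b} = {i} := by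
  intro π i hi
  have hks : a + b + c ≤ (k + 1) * (a + b + c) := Nat.le_mul_of_pos_left _ (Nat.succ_pos k)
  have hle : a + b + c ≤ (k + 1) * (a + b + c) + c := le_trans hks (Nat.le_add_right _ _)
  have hπ : ∀ x, π x = (tauShift (a + b + c) c ((k + 1) * (a + b + c) + c) hle)
      (((finRotate ((k + 1) * (a + b + c) + c)) ^ (a + b + c)) x) := fun _ => rfl
  have step : ∀ x : Fin ((k + 1) * (a + b + c) + c),
      (π x).val = if (x.val + (a + b + c)) % ((k + 1) * (a + b + c) + c) < a + b + c
        then ((x.val + (a + b + c)) % ((k + 1) * (a + b + c) + c) + c) % (a + b + c)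
        else (x.val + (a + b + c)) % ((k + 1) * (a + b + c) + c) := by
    intro x
    rw [hπ]
    have hw := finRotate_pow_val ((k + 1) * (a + b + c) + c) (a + b + c) x
    by_cases h : (((finRotate ((k + 1) * (a + b + c) + c)) ^ (a + b + c)) x).val < a + b + c
    · rw [tauShift_val_lt hle _ h, hw, if_pos (hw ▸ h)]
    · rw [tauShift_apply_ge hle _ h, hw, if_neg (hw ▸ h)]
  have pow_val : ∀ m : ℕ, i.val + m * (a + b + c) < (k + 1) * (a + b + c) + c →
      ((π ^ m) i).val = i.val + m * (a + b + c) := by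
    intro m
    induction m with
    | zero => intro _; simp
    | succ m ih =>
      intro hm
      have hmono : m * (a + b + c) ≤ (m + 1) * (a + b + c) :=
        Nat.mul_le_mul_right _ (Nat.le_succ m)
      have ihv := ih (by omega)
      have h3 : a + b + c ≤ (m + 1) * (a + b + c) := Nat.le_mul_of_pos_left _ (Nat.succ_pos m)
      rw [pow_succ', Equiv.Perm.mul_apply, step, ihv]
      have h2 : i.val + m * (a + b + c) + (a + b + c) = i.val + (m + 1) * (a + b + c) := by ring
      rw [h2, Nat.mod_eq_of_lt hm, if_neg (by omega)]
  have main : ∀ p : ℕ, 0 < p → (π ^ p) i = i →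
      (∀ m, m < p → i.val + m * (a + b + c) < (k + 1) * (a + b + c) + c) →
      (permOrbit π i).ncard = p ∧
      permOrbit π i ∩ {x : Fin ((k + 1) * (a + b + c) + c) | (x : ℕ) < a + b} = {i} := by
    intro p hp hfix hbound
    have horb := orbit_eq_image π i p hp hfix
    have hinj : Set.InjOn (fun m => (π ^ m) i) (Finset.range p) := by
      intro m1 h1 m2 h2 he
      simp only [Finset.coe_range, Set.mem_Iio] at h1 h2
      have v1 := pow_val m1 (hbound m1 h1)
      have v2 := pow_val m2 (hbound m2 h2)
      have he' : ((π ^ m1) i).val = ((π ^ m2) i).val := congrArg Fin.val he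
      exact Nat.eq_of_mul_eq_mul_right (show 0 < a + b + c by omega) (by omega)
    constructor
    · rw [horb, Set.ncard_coe_finset]
      exact (Finset.card_image_of_injOn hinj).trans (Finset.card_range p)
    · rw [horb]
      ext y
      simp only [Set.mem_inter_iff, Finset.coe_image, Set.mem_image, Finset.mem_coe,
        Finset.mem_range, Set.mem_setOf_eq, Set.mem_singleton_iff, Finset.coe_range, Set.mem_Iio]
      constructor
      · rintro ⟨⟨m, hm, rfl⟩, hlt⟩
        rcases Nat.eq_zero_or_pos m with rfl | hm0
        · simp
        · exfalso
          have hv := pow_val m (hbound m hm)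
          have hs : a + b + c ≤ m * (a + b + c) := Nat.le_mul_of_pos_left _ hm0
          omega
      · rintro rfl
        exact ⟨⟨0, hp, by simp⟩, hi⟩
  by_cases hic : i.val < c
  · have hb1 : ∀ m, m < k + 2 → i.val + m * (a + b + c) < (k + 1) * (a + b + c) + c := by
      intro m hm
      have : m * (a + b + c) ≤ (k + 1) * (a + b + c) := Nat.mul_le_mul_right _ (by omega)
      omega
    have hfix : (π ^ (k + 2)) i = i := by
      have hv := pow_val (k + 1) (hb1 (k + 1) (by omega))
      apply Fin.ext
      rw [pow_succ', Equiv.Perm.mul_apply, step, hv]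
      have hA : (i.val + (k + 1) * (a + b + c) + (a + b + c)) % ((k + 1) * (a + b + c) + c)
          = i.val + a + b := by
        have h1 : i.val + (k + 1) * (a + b + c) + (a + b + c)
            = ((k + 1) * (a + b + c) + c) + (i.val + a + b) := by omega
        rw [h1, Nat.add_mod_left, Nat.mod_eq_of_lt (by omega)]
      rw [hA, if_pos (by omega)]
      have h2 : i.val + a + b + c = i.val + (a + b + c) := by ring
      rw [h2, Nat.add_mod_right, Nat.mod_eq_of_lt (by omega)]
    obtain ⟨h1, h2⟩ := main (k + 2) (by omega) hfix hb1
    exact ⟨fun _ => h1, fun hcc => absurd hcc (by omega), h2⟩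
  · push_neg at hic
    have hkk : (k + 1) * (a + b + c) = k * (a + b + c) + (a + b + c) := by ring
    have hb2 : ∀ m, m < k + 1 → i.val + m * (a + b + c) < (k + 1) * (a + b + c) + c := by
      intro m hm
      have : m * (a + b + c) ≤ k * (a + b + c) := Nat.mul_le_mul_right _ (by omega)
      omega
    have hfix : (π ^ (k + 1)) i = i := by
      have hv := pow_val k (hb2 k (by omega))
      apply Fin.ext
      rw [pow_succ', Equiv.Perm.mul_apply, step, hv]
      have hA : (i.val + k * (a + b + c) + (a + b + c)) % ((k + 1) * (a + b + c) + c)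
          = i.val - c := by
        have h1 : i.val + k * (a + b + c) + (a + b + c)
            = ((k + 1) * (a + b + c) + c) + (i.val - c) := by omega
        rw [h1, Nat.add_mod_left, Nat.mod_eq_of_lt (by omega)]
      rw [hA, if_pos (by omega)]
      have h2 : i.val - c + c = i.val := by omega
      rw [h2, Nat.mod_eq_of_lt (by omega)]
    obtain ⟨h1, h2⟩ := main (k + 1) (by omega) hfix hb2
    exact ⟨fun hcc => absurd hcc (by omega), fun _ => h1, h2⟩
end
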